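/- arXiv:1805.12157 — 5 statements merged into one kernel-verified Lean document; each statement's English description precedes it below -/
import Mathlib

section
/- If G is a finite group such that the poset C(G) of cyclic subgroups of G possesses a breaking point, then G is a p-group for some prime p (i.e., the order of G is a prime power). -/
/-- `H` is a breaking point of the poset `C(G)` of cyclic subgroups of `G`:
`H` is a proper nontrivial cyclic subgroup of `G` such that every cyclic
subgroup of `G` is comparable with `H` under inclusion. -/
def IsBreakingPoint {G : Type*} [Group G] (H : Subgroup G) : Prop :=
  IsCyclic ↥H ∧ H ≠ ⊥ ∧ H ≠ ⊤ ∧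
    ∀ X : Subgroup G, IsCyclic ↥X → X ≤ H ∨ H ≤ X


lemma isCyclic_zpowers' {G : Type*} [Group G] (x : G) :
    IsCyclic ↥(Subgroup.zpowers x) := by
  refine ⟨⟨⟨x, Subgroup.mem_zpowers x⟩, ?_⟩⟩
  rintro ⟨y, hy⟩
  obtain ⟨k, hk⟩ := Subgroup.mem_zpowers_iff.mp hy
  exact ⟨k, Subtype.ext (by simpa [Subgroup.coe_zpow] using hk)⟩

theorem isPGroup_of_breaking_point
    {G : Type*} [Group G] [Finite G] (h : ∃ H : Subgroup G, IsBreakingPoint H) :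
    ∃ p : ℕ, p.Prime ∧ IsPGroup p G := by
  obtain ⟨H, hcyc, hbot, htop, hcomp⟩ := h
  have hcard1 : Nat.card H ≠ 1 := by
    simpa [Subgroup.card_eq_one] using hbot
  set p := (Nat.card H).minFac with hpdef
  have hp : p.Prime := Nat.minFac_prime hcard1
  have hpdvd : p ∣ Nat.card H := Nat.minFac_dvd _
  -- helper: if an element is not in H then H ≤ zpowers of it
  have key : ∀ x : G, x ∉ H → H ≤ Subgroup.zpowers x := by
    intro x hx
    rcases hcomp (Subgroup.zpowers x) (isCyclic_zpowers' x) with h₁ | h₂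
    · exact absurd (h₁ (Subgroup.mem_zpowers x)) hx
    · exact h₂
  -- Step A : every prime dividing card H equals p
  have stepA : ∀ q : ℕ, q.Prime → q ∣ Nat.card H → q = p := by
    intro q hq hqdvd
    by_contra hqp
    obtain ⟨x, hx⟩ : ∃ x : G, x ∉ H := by
      by_contra hall
      push_neg at hall
      exact htop ((Subgroup.eq_top_iff' H).mpr hall)
    have hHx : H ≤ Subgroup.zpowers x := key x hx
    set n := orderOf x with hn
    have hn0 : n ≠ 0 := (orderOf_pos x).ne'
    set a := n.factorization p with ha
    set m := n / p ^ a with hm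
    have hpa_dvd : p ^ a ∣ n := Nat.ordProj_dvd n p
    have hmul : p ^ a * m = n := Nat.ordProj_mul_ordCompl_eq_self n p
    have hpm : ¬ p ∣ m := Nat.not_dvd_ordCompl hp hn0
    have hm_dvd : m ∣ n := Nat.ordCompl_dvd n p
    set u := x ^ (p ^ a) with hu
    set v := x ^ m with hv
    have hou : orderOf u = m := by
      rw [hu, orderOf_pow, ← hn, Nat.gcd_eq_right hpa_dvd, hm]
    have hov : orderOf v = p ^ a := by
      rw [hv, orderOf_pow, ← hn, Nat.gcd_eq_right hm_dvd]
      exact Nat.div_eq_of_eq_mul_left (Nat.pos_of_ne_zero (by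
        intro hmz; rw [hmz, Nat.mul_zero] at hmul; exact hn0 hmul.symm)) hmul.symm
    -- u ∈ H
    have huH : u ∈ H := by
      by_contra huH
      have := Subgroup.card_dvd_of_le (key u huH)
      rw [Nat.card_zpowers, hou] at this
      exact hpm (hpdvd.trans this)
    -- v ∈ H
    have hvH : v ∈ H := by
      by_contra hvH
      have := Subgroup.card_dvd_of_le (key v hvH)
      rw [Nat.card_zpowers, hov] at this
      exact hqp ((Nat.prime_dvd_prime_iff_eq hq hp).mp
        (hq.dvd_of_dvd_pow (hqdvd.trans this)))
    -- Bezout: x ∈ H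
    have hcop : Nat.Coprime (p ^ a) m :=
      Nat.Coprime.pow_left _ ((Nat.Prime.coprime_iff_not_dvd hp).mpr hpm)
    have hgcd : Int.gcd ((p ^ a : ℕ) : ℤ) ((m : ℕ) : ℤ) = 1 := by
      rwa [Int.gcd_natCast_natCast]
    have hbez : ((p ^ a : ℕ) : ℤ) * Int.gcdA ((p ^ a : ℕ) : ℤ) ((m : ℕ) : ℤ) +
        ((m : ℕ) : ℤ) * Int.gcdB ((p ^ a : ℕ) : ℤ) ((m : ℕ) : ℤ) = 1 := by
      have := Int.gcd_eq_gcd_ab ((p ^ a : ℕ) : ℤ) ((m : ℕ) : ℤ)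
      rw [hgcd] at this
      exact_mod_cast this.symm
    have hxH : x ∈ H := by
      have : x = u ^ Int.gcdA ((p ^ a : ℕ) : ℤ) ((m : ℕ) : ℤ) *
          v ^ Int.gcdB ((p ^ a : ℕ) : ℤ) ((m : ℕ) : ℤ) := by
        rw [hu, hv, ← zpow_natCast x (p ^ a), ← zpow_natCast x m,
          ← zpow_mul, ← zpow_mul, ← zpow_add, hbez, zpow_one]
      rw [this]
      exact mul_mem (H.zpow_mem huH _) (H.zpow_mem hvH _)
    exact hx hxH
  -- Step B : every element has p-power order
  refine ⟨p, hp, ?_⟩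
  have : Fact p.Prime := ⟨hp⟩
  rw [IsPGroup.iff_orderOf]
  intro g
  have hg0 : orderOf g ≠ 0 := (orderOf_pos g).ne'
  have hall : ∀ {q : ℕ}, q.Prime → q ∣ orderOf g → q = p := by
    intro q hq hqg
    set w := g ^ (orderOf g / q) with hw
    have how : orderOf w = q := by
      rw [hw, orderOf_pow, Nat.gcd_eq_right (Nat.div_dvd_of_dvd hqg),
        Nat.div_div_self hqg hg0]
    rcases hcomp (Subgroup.zpowers w) (isCyclic_zpowers' w) with h₁ | h₂
    · -- zpowers w ≤ H : q ∣ card H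
      have : orderOf w ∣ Nat.card H := by
        rw [← Nat.card_zpowers]
        exact Subgroup.card_dvd_of_le h₁
      exact stepA q hq (how ▸ this)
    · -- H ≤ zpowers w : card H ∣ q, so card H = q
      have hdvd : Nat.card H ∣ q := by
        have := Subgroup.card_dvd_of_le h₂
        rwa [Nat.card_zpowers, how] at this
      rcases (Nat.Prime.eq_one_or_self_of_dvd hq _ hdvd) with h1 | h1
      · exact absurd h1 hcard1
      · exact (stepA q hq (h1 ▸ dvd_refl _)).symm ▸ stepA q hq (h1 ▸ dvd_refl _)
  exact ⟨(orderOf g).primeFactorsList.length,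
    Nat.eq_prime_pow_of_unique_prime_dvd hg0 hall⟩
end

section
/- Let G be a finite group and H a breaking point of the poset C(G) of cyclic subgroups of G. Then the order of H is a prime power, i.e., H is a p-group for some prime p. -/
lemma zpowers_isCyclic' {G : Type*} [Group G] (g : G) :
    IsCyclic (Subgroup.zpowers g) := by
  refine ⟨⟨⟨g, Subgroup.mem_zpowers g⟩, fun x => ?_⟩⟩
  obtain ⟨k, hk⟩ := x.2
  exact ⟨k, Subtype.ext (by simpa using hk)⟩

theorem breaking_point_isPGroup
    {G : Type*} [Group G] [Finite G] (H : Subgroup G) (hH : IsBreakingPoint H) :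
    ∃ p : ℕ, p.Prime ∧ IsPGroup p ↥H := by
  obtain ⟨hcyc, hbot, htop, hcomp⟩ := hH
  set n := Nat.card H with hn
  have hn1 : n ≠ 1 := fun h => hbot (Subgroup.eq_bot_of_card_eq H h)
  have hn0 : n ≠ 0 := Nat.card_pos.ne'
  -- get g ∉ H
  obtain ⟨g, hg⟩ : ∃ g : G, g ∉ H := by
    by_contra h
    push_neg at h
    exact htop ((Subgroup.eq_top_iff' H).mpr h)
  have hle : H ≤ Subgroup.zpowers g := by
    rcases hcomp (Subgroup.zpowers g) (zpowers_isCyclic' g) with h | h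
    · exact absurd (h (Subgroup.mem_zpowers g)) hg
    · exact h
  set N := orderOf g with hN
  have hN0 : N ≠ 0 := (orderOf_pos g).ne'
  have hnN : n ∣ N := by
    have := Subgroup.card_dvd_of_le hle
    rwa [Nat.card_zpowers] at this
  have hneq : n ≠ N := by
    intro h
    apply hg
    have : H = Subgroup.zpowers g := by
      apply Subgroup.eq_of_le_of_card_ge hle
      rw [Nat.card_zpowers]; omega
    exact this ▸ Subgroup.mem_zpowers g
  -- find a prime r with r ^ (n.factorization r + 1) ∣ N
  have hM0 : N / n ≠ 0 := (Nat.div_ne_zero_iff_of_dvd hnN).mpr ⟨hN0, hn0⟩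
  have hNmul : N = n * (N / n) := (Nat.mul_div_cancel' hnN).symm
  have hM1 : N / n ≠ 1 := by
    intro h
    rw [h, mul_one] at hNmul
    exact hneq hNmul.symm
  obtain ⟨r, hr, hrM⟩ := Nat.exists_prime_and_dvd hM1
  have hrN : r ^ (n.factorization r + 1) ∣ N := by
    have hfac : n.factorization r + 1 ≤ N.factorization r := by
      have h1 : 1 ≤ (N / n).factorization r :=
        Nat.Prime.factorization_pos_of_dvd hr hM0 hrM
      have : N.factorization = n.factorization + (N / n).factorization := by
        conv_lhs => rw [hNmul]
        exact Nat.factorization_mul hn0 hM0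
      rw [this, Finsupp.add_apply]
      omega
    calc r ^ (n.factorization r + 1) ∣ r ^ N.factorization r := pow_dvd_pow _ hfac
      _ ∣ N := Nat.ordProj_dvd N r
  -- the incomparable cyclic subgroup
  set d := r ^ (n.factorization r + 1) with hd
  set x := g ^ (N / d) with hx
  have hox : orderOf x = d := orderOf_pow_orderOf_div hN0 hrN
  have hcardX : Nat.card (Subgroup.zpowers x) = d := by rw [Nat.card_zpowers, hox]
  -- by contradiction, assume no prime p works
  by_contra hcon
  push_neg at hcon
  -- then n has a prime factor s ≠ r
  have hnotpow : n ≠ r ^ n.factorization r := fun h =>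
    hcon r hr (IsPGroup.of_card h)
  have hc0 : n / r ^ n.factorization r ≠ 0 := (Nat.ordCompl_pos r hn0).ne'
  have hc1 : n / r ^ n.factorization r ≠ 1 := by
    intro h
    exact hnotpow (by
      have := Nat.ordProj_dvd n r
      have := Nat.eq_mul_of_div_eq_right this h
      omega)
  obtain ⟨s, hs, hsc⟩ := Nat.exists_prime_and_dvd hc1
  have hsn : s ∣ n := hsc.trans (Nat.ordCompl_dvd n r)
  have hsr : s ≠ r := by
    intro h
    exact Nat.not_dvd_ordCompl hr hn0 (h ▸ hsc)
  -- derive the contradiction from comparability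
  rcases hcomp (Subgroup.zpowers x) (zpowers_isCyclic' x) with h | h
  · have hdvd : d ∣ n := by
      have := Subgroup.card_dvd_of_le h
      rwa [hcardX] at this
    exact Nat.pow_succ_factorization_not_dvd hn0 hr hdvd
  · have hdvd : n ∣ d := by
      have := Subgroup.card_dvd_of_le h
      rwa [hcardX] at this
    have : s ∣ r ^ (n.factorization r + 1) := hsn.trans hdvd
    have := hs.dvd_of_dvd_pow this
    exact hsr ((Nat.prime_dvd_prime_iff_eq hs hr).mp this)
end

section
/- Let G be a finite noncyclic p-group (p prime) such that the poset C(G) of cyclic subgroups of G possesses a breaking point. Then G has a unique subgroup of order p. -/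
theorem unique_subgroup_order_p_of_noncyclic_pGroup_breaking_point
    {G : Type*} [Group G] [Finite G] (p : ℕ) (hp : p.Prime) (hG : IsPGroup p G)
    (hnc : ¬ IsCyclic G) (h : ∃ H : Subgroup G, IsBreakingPoint H) :
    ∃! K : Subgroup G, Nat.card ↥K = p := by
  classical
  have : Fact p.Prime := ⟨hp⟩
  obtain ⟨H, hcyc, hbot, htop, hcomp⟩ := h
  -- G is nontrivial
  have hnt : Nontrivial G := by
    by_contra hs
    rw [not_nontrivial_iff_subsingleton] at hs
    exact hnc (isCyclic_of_subsingleton)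
  -- there exists an element of order p
  have hdvd : p ∣ Nat.card G := by
    obtain ⟨n, hn0, hn⟩ := hG.nontrivial_iff_card.mp hnt
    exact hn ▸ dvd_pow_self p hn0.ne'
  have : Fintype G := Fintype.ofFinite G
  obtain ⟨g, hg⟩ := exists_prime_orderOf_dvd_card (G := G) p
    (by rwa [← Nat.card_eq_fintype_card])
  -- key: every subgroup of order p is ≤ H
  have key : ∀ K : Subgroup G, Nat.card ↥K = p → K ≤ H := by
    intro K hK
    have hKcyc : IsCyclic ↥K := isCyclic_of_prime_card hK
    rcases hcomp K hKcyc with h1 | h2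
    · exact h1
    · -- H ≤ K forces H = K since H ≠ ⊥ and K has prime order
      have := Subgroup.eq_of_le_of_card_ge h2 ?_
      · exact this ▸ le_refl K
      · -- Nat.card K ≤ Nat.card H
        have hHdvd : Nat.card ↥H ∣ Nat.card ↥K := Subgroup.card_dvd_of_le h2
        rw [hK] at hHdvd
        rcases (Nat.Prime.eq_one_or_self_of_dvd hp _ hHdvd) with h1 | h1
        · exact absurd (Subgroup.eq_bot_of_card_eq H h1) hbot
        · rw [hK, h1]
  -- uniqueness of subgroups of order p inside the cyclic group H
  have uniq : ∀ K₁ K₂ : Subgroup G, Nat.card ↥K₁ = p → Nat.card ↥K₂ = p → K₁ = K₂ := by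
    intro K₁ K₂ h1 h2
    have hle1 := key K₁ h1
    have hle2 := key K₂ h2
    have : Fintype ↥H := Fintype.ofFinite _
    -- cards of subgroupOf
    have hc1 : Nat.card ↥(K₁.subgroupOf H) = p := by
      rw [Nat.card_congr (Subgroup.subgroupOfEquivOfLe hle1).toEquiv]; exact h1
    have hc2 : Nat.card ↥(K₂.subgroupOf H) = p := by
      rw [Nat.card_congr (Subgroup.subgroupOfEquivOfLe hle2).toEquiv]; exact h2
    -- elements of each satisfy x ^ p = 1
    have hmem : ∀ (K : Subgroup ↥H), Nat.card ↥K = p → ∀ x ∈ K, x ^ p = 1 := by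
      intro K hK x hx
      have : (⟨x, hx⟩ : ↥K) ^ Nat.card ↥K = 1 := pow_card_eq_one'
      rw [hK] at this
      exact Subtype.ext_iff.mp this
    -- the filter set
    set S : Finset ↥H := Finset.univ.filter (fun b : ↥H => b ^ p = 1) with hS
    have hScard : S.card ≤ p := IsCyclic.card_pow_eq_one_le hp.pos
    have hsub : ∀ (K : Subgroup ↥H), Nat.card ↥K = p →
        (K : Set ↥H).toFinset = S := by
      intro K hK
      apply Finset.eq_of_subset_of_card_le
      · intro x hx
        rw [Set.mem_toFinset] at hx
        simp only [hS, Finset.mem_filter, Finset.mem_univ, true_and]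
        exact hmem K hK x hx
      · rw [Set.toFinset_card]
        calc S.card ≤ p := hScard
        _ = Nat.card ↥K := hK.symm
        _ = Fintype.card (K : Set ↥H) := by
            rw [Nat.card_eq_fintype_card]; rfl
    have hsets : (K₁.subgroupOf H : Set ↥H) = (K₂.subgroupOf H : Set ↥H) := by
      have := (hsub _ hc1).trans (hsub _ hc2).symm
      rwa [Set.toFinset_inj] at this
    have hsg : K₁.subgroupOf H = K₂.subgroupOf H := SetLike.coe_injective hsets
    calc K₁ = (K₁.subgroupOf H).map H.subtype := by
          rw [Subgroup.subgroupOf_map_subtype, inf_eq_left.mpr hle1]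
      _ = (K₂.subgroupOf H).map H.subtype := by rw [hsg]
      _ = K₂ := by rw [Subgroup.subgroupOf_map_subtype, inf_eq_left.mpr hle2]
  refine ⟨Subgroup.zpowers g, ?_, fun K hK => uniq K _ hK ?_⟩
  · show Nat.card ↥(Subgroup.zpowers g) = p
    rw [Nat.card_zpowers, hg]
  · rw [Nat.card_zpowers, hg]
end

section
/- For every n ≥ 3, the unique subgroup of order 2 of the generalized quaternion group Q_{2^n}, namely the subgroup generated by a^{2^{n-2}}, is a breaking point of the poset C(Q_{2^n}) of cyclic subgroups of Q_{2^n}. -/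
theorem quaternion_order_two_subgroup_is_breaking_point (n : ℕ) (hn : 3 ≤ n) :
    Nat.card ↥(Subgroup.zpowers
        ((QuaternionGroup.a 1 : QuaternionGroup (2 ^ (n - 2))) ^ 2 ^ (n - 2))) = 2 ∧
    (∀ K : Subgroup (QuaternionGroup (2 ^ (n - 2))), Nat.card ↥K = 2 →
      K = Subgroup.zpowers
        ((QuaternionGroup.a 1 : QuaternionGroup (2 ^ (n - 2))) ^ 2 ^ (n - 2))) ∧
    IsBreakingPoint (Subgroup.zpowers
        ((QuaternionGroup.a 1 : QuaternionGroup (2 ^ (n - 2))) ^ 2 ^ (n - 2))) := by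
  set m : ℕ := 2 ^ (n - 2) with hmdef
  have hm2 : 2 ≤ m := by
    have h1 : 1 ≤ n - 2 := by omega
    calc 2 = 2 ^ 1 := rfl
    _ ≤ 2 ^ (n - 2) := Nat.pow_le_pow_right (by norm_num) h1
  haveI : NeZero m := ⟨by omega⟩
  set g : QuaternionGroup m := (QuaternionGroup.a 1) ^ m with hgdef
  haveI : Fact (Nat.Prime 2) := ⟨Nat.prime_two⟩
  -- order of g is 2
  have horder : orderOf g = 2 := by
    rw [hgdef, orderOf_pow, QuaternionGroup.orderOf_a_one]
    have hgcd : Nat.gcd (2 * m) m = m := Nat.gcd_eq_right (dvd_mul_left m 2)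
    rw [hgcd, Nat.mul_div_cancel 2 (show 0 < m by omega)]
  have hcard : Nat.card ↥(Subgroup.zpowers g) = 2 := by
    rw [Nat.card_zpowers, horder]
  -- g is the unique element of order 2
  have huniq : ∀ x : QuaternionGroup m, orderOf x = 2 → x = g := by
    intro x hx
    rcases x with i | i
    · rw [QuaternionGroup.orderOf_a] at hx
      have hd : Nat.gcd (2 * m) i.val ∣ 2 * m := Nat.gcd_dvd_left _ _
      have hgpos : 0 < Nat.gcd (2 * m) i.val := Nat.gcd_pos_of_pos_left _ (by omega)
      have hglt : Nat.gcd (2 * m) i.val = m := by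
        have h2 : 2 * m = 2 * Nat.gcd (2 * m) i.val :=
          (Nat.div_eq_iff_eq_mul_left hgpos hd).mp hx
        omega
      have h1 : m ∣ i.val := by
        conv_lhs => rw [← hglt]
        exact Nat.gcd_dvd_right _ _
      have h2 : i.val < 2 * m := i.val_lt
      have hival : i.val = m := by
        obtain ⟨c, hc⟩ := h1
        have hclt : c < 2 := by
          by_contra hcc
          push_neg at hcc
          have : m * 2 ≤ m * c := Nat.mul_le_mul_left m hcc
          omega
        interval_cases c
        · rw [Nat.mul_zero] at hc
          rw [hc, Nat.gcd_zero_right] at hglt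
          omega
        · omega
      have hi : i = (m : ZMod (2 * m)) := by
        rw [← ZMod.natCast_zmod_val i, hival]
      rw [hi, hgdef, QuaternionGroup.a_one_pow]
    · rw [QuaternionGroup.orderOf_xa] at hx
      omega
  have hG : Nat.card (QuaternionGroup m) = 2 ^ n := by
    rw [Nat.card_eq_fintype_card, QuaternionGroup.card, hmdef,
      show (4 : ℕ) = 2 ^ 2 from rfl, ← pow_add]
    congr 1
    omega
  -- any nontrivial subgroup contains zpowers g
  have hkey : ∀ X : Subgroup (QuaternionGroup m), X ≠ ⊥ → Subgroup.zpowers g ≤ X := by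
    intro X hX
    have hXcard : 1 < Nat.card ↥X := (Subgroup.one_lt_card_iff_ne_bot X).mpr hX
    have hdvdG : Nat.card ↥X ∣ Nat.card (QuaternionGroup m) := X.card_subgroup_dvd_card
    have h2dvd : 2 ∣ Nat.card ↥X := by
      rw [hG] at hdvdG
      obtain ⟨k, hk, hkeq⟩ := (Nat.dvd_prime_pow Nat.prime_two).mp hdvdG
      rcases Nat.eq_zero_or_pos k with h0 | h0
      · rw [h0, pow_zero] at hkeq; omega
      · exact hkeq ▸ dvd_pow_self 2 (by omega)
    obtain ⟨y, hy⟩ := exists_prime_orderOf_dvd_card' (G := ↥X) 2 h2dvd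
    have hyo : orderOf (y : QuaternionGroup m) = 2 := by
      rw [Subgroup.orderOf_coe, hy]
    have hyg : (y : QuaternionGroup m) = g := huniq _ hyo
    exact Subgroup.zpowers_le.mpr (hyg ▸ y.2)
  refine ⟨hcard, ?_, ?_, ?_, ?_, ?_⟩
  · -- uniqueness of subgroup of order 2
    intro K hK
    have hKbot : K ≠ ⊥ := by
      intro h
      rw [h, Subgroup.card_bot] at hK
      omega
    exact (Subgroup.eq_of_le_of_card_ge (hkey K hKbot) (by rw [hcard, hK])).symm
  · -- cyclic
    exact isCyclic_of_prime_card hcard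
  · -- ≠ ⊥
    intro h
    rw [h, Subgroup.card_bot] at hcard
    omega
  · -- ≠ ⊤
    intro h
    rw [h, Subgroup.card_top, hG] at hcard
    have : 2 ^ 3 ≤ 2 ^ n := Nat.pow_le_pow_right (by norm_num) hn
    omega
  · -- comparability
    intro X _
    rcases eq_or_ne X ⊥ with hX | hX
    · left; rw [hX]; exact bot_le
    · exact Or.inr (hkey X hX)
end

section
/- Let G be a finite p-group (p prime) and suppose H is a cyclic subgroup of G such that for every cyclic subgroup C of G there exists g ∈ G with C ≤ gHg^{-1} or H ≤ gCg^{-1}, where H is proper and nontrivial. If G is noncyclic, then G has a unique subgroup of order p. -/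
/-- In a finite cyclic group, two subgroups of the same prime order coincide. -/
lemma aux_cyclic_unique_prime_subgroup {M : Type*} [Group M] [Finite M] [IsCyclic M] {p : ℕ}
    (hp : p.Prime) (A B : Subgroup M) (hA : Nat.card A = p) (hB : Nat.card B = p) : A = B := by
  classical
  have := Fintype.ofFinite M
  have key : ∀ C : Subgroup M, Nat.card C = p →
      (C : Set M).toFinset = ({a : M | a ^ p = 1} : Finset M) := by
    intro C hC
    apply Finset.eq_of_subset_of_card_le
    · intro x hx
      rw [Set.mem_toFinset] at hx
      simp only [Finset.mem_filter, Finset.mem_univ, true_and]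
      have : (⟨x, hx⟩ : C) ^ p = 1 := by
        rw [← hC]; exact pow_card_eq_one'
      exact_mod_cast congrArg (Subgroup.subtype C) this
    · have h1 : Finset.card ({a : M | a ^ p = 1} : Finset M) ≤ p :=
        IsCyclic.card_pow_eq_one_le hp.pos
      have h2 : (C : Set M).toFinset.card = p := by
        rw [Set.toFinset_card, ← Nat.card_eq_fintype_card]
        simpa using hC
      omega
  have := (key A hA).trans (key B hB).symm
  apply SetLike.coe_injective
  rw [← Set.coe_toFinset (A : Set M), ← Set.coe_toFinset (B : Set M), this]

theorem unique_subgroup_order_p_of_conj_breaking_point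
    {G : Type*} [Group G] [Finite G] (p : ℕ) (hp : p.Prime) (hG : IsPGroup p G)
    (H : Subgroup G) (hcyc : IsCyclic ↥H) (hbot : H ≠ ⊥) (htop : H ≠ ⊤)
    (hcomp : ∀ C : Subgroup G, IsCyclic ↥C →
      ∃ g : G, C ≤ Subgroup.map (MulAut.conj g).toMonoidHom H ∨
        H ≤ Subgroup.map (MulAut.conj g).toMonoidHom C)
    (hnc : ¬ IsCyclic G) :
    ∃! K : Subgroup G, Nat.card ↥K = p := by
  have : Fact p.Prime := ⟨hp⟩
  have hnt : Nontrivial G := Nontrivial.of_not_isCyclic hnc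
  -- a central element of order p
  have hcp : IsPGroup p (Subgroup.center G) := hG.to_subgroup _
  have hcnt : Nontrivial (Subgroup.center G) := hG.center_nontrivial
  obtain ⟨z, hz⟩ : ∃ z : Subgroup.center G, orderOf z = p := by
    obtain ⟨k, hk0, hk⟩ := hcp.nontrivial_iff_card.mp hcnt
    exact exists_prime_orderOf_dvd_card' p (hk ▸ dvd_pow_self p hk0.ne')
  have hzG : orderOf (z : G) = p := by rw [Subgroup.orderOf_coe, hz]
  set L : Subgroup G := Subgroup.zpowers (z : G) with hLdef
  have hL : Nat.card L = p := by rw [hLdef, Nat.card_zpowers, hzG]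
  -- conjugation fixes L
  have hLfix : ∀ g : G, Subgroup.map (MulAut.conj g).toMonoidHom L = L := by
    intro g
    rw [hLdef, MonoidHom.map_zpowers]
    congr 1
    have hzc := (Subgroup.mem_center_iff.mp z.2) g
    simp only [MulEquiv.coe_toMonoidHom, MulAut.conj_apply]
    rw [hzc, mul_inv_cancel_right]
  -- card of a conjugate
  have hcard_conj : ∀ (g : G) (K : Subgroup G),
      Nat.card (Subgroup.map (MulAut.conj g).toMonoidHom K) = Nat.card K := by
    intro g K
    exact (Nat.card_congr ((MulEquiv.subgroupMap (MulAut.conj g) K).toEquiv)).symm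
  -- conjugating back and forth is the identity
  have hconj_inv : ∀ (g : G) (K : Subgroup G),
      Subgroup.map (MulAut.conj g⁻¹).toMonoidHom
        (Subgroup.map (MulAut.conj g).toMonoidHom K) = K := by
    intro g K
    rw [Subgroup.map_map]
    have hid : ((MulAut.conj g⁻¹).toMonoidHom.comp (MulAut.conj g).toMonoidHom)
        = MonoidHom.id G := by
      ext x
      simp [mul_assoc]
    rw [hid, Subgroup.map_id]
  -- L ≤ H
  have hLH : L ≤ H := by
    obtain ⟨g, hg | hg⟩ := hcomp L (isCyclic_of_prime_card hL)
    · -- L ≤ gHg⁻¹, conjugate back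
      have h' := Subgroup.map_mono (f := (MulAut.conj g⁻¹).toMonoidHom) hg
      rw [hLfix g⁻¹, hconj_inv g H] at h'
      exact h'
    · -- H ≤ L, so H = L by cardinality
      rw [hLfix g] at hg
      have hHcard : 1 < Nat.card H := (Subgroup.one_lt_card_iff_ne_bot H).mpr hbot
      have : H = L := by
        have hdvd : Nat.card H ∣ Nat.card L := Subgroup.card_dvd_of_le hg
        rw [hL] at hdvd
        rcases (Nat.Prime.eq_one_or_self_of_dvd hp _ hdvd) with h1 | h1
        · omega
        · exact Subgroup.eq_of_le_of_card_ge hg (by rw [hL, h1])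
      rw [this]
  -- main claim: unique subgroup of order p is L
  refine ⟨L, hL, fun K hK => ?_⟩
  have hKcyc : IsCyclic K := isCyclic_of_prime_card hK
  obtain ⟨g, hg | hg⟩ := hcomp K hKcyc
  · -- K ≤ gHg⁻¹ =: M; also L ≤ M; M is cyclic
    set M := Subgroup.map (MulAut.conj g).toMonoidHom H with hM
    have hLM : L ≤ M := by
      rw [← hLfix g]; exact Subgroup.map_mono hLH
    have hMcyc : IsCyclic M :=
      isCyclic_of_surjective _ (MulEquiv.subgroupMap (MulAut.conj g) H).surjective
    have h1 : Nat.card (K.subgroupOf M) = p := by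
      rw [← hK]; exact Nat.card_congr (Subgroup.subgroupOfEquivOfLe hg).toEquiv
    have h2 : Nat.card (L.subgroupOf M) = p := by
      rw [← hL]; exact Nat.card_congr (Subgroup.subgroupOfEquivOfLe hLM).toEquiv
    have heq := aux_cyclic_unique_prime_subgroup hp _ _ h1 h2
    ext x
    constructor
    · intro hx
      have h' : (⟨x, hg hx⟩ : M) ∈ K.subgroupOf M := Subgroup.mem_subgroupOf.mpr hx
      rw [heq] at h'
      exact Subgroup.mem_subgroupOf.mp h'
    · intro hx
      have h' : (⟨x, hLM hx⟩ : M) ∈ L.subgroupOf M := Subgroup.mem_subgroupOf.mpr hx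
      rw [← heq] at h'
      exact Subgroup.mem_subgroupOf.mp h'
  · -- H ≤ gKg⁻¹, so |H| = p, so H = L, so K = L
    have hcK : Nat.card (Subgroup.map (MulAut.conj g).toMonoidHom K) = p := by
      rw [hcard_conj, hK]
    have hHcard : 1 < Nat.card H := (Subgroup.one_lt_card_iff_ne_bot H).mpr hbot
    have hHeq : H = Subgroup.map (MulAut.conj g).toMonoidHom K := by
      have hdvd : Nat.card H ∣ p := hcK ▸ Subgroup.card_dvd_of_le hg
      rcases hp.eq_one_or_self_of_dvd _ hdvd with h1 | h1
      · omega
      · exact Subgroup.eq_of_le_of_card_ge hg (by rw [hcK, h1])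
    have hLHeq : L = H := Subgroup.eq_of_le_of_card_ge hLH (by
      rw [hL, hHeq, hcK])
    -- now map conj g K = L, conjugate back
    have : Subgroup.map (MulAut.conj g).toMonoidHom K = L := (hHeq ▸ hLHeq).symm
    have h3 := congrArg (Subgroup.map (MulAut.conj g⁻¹).toMonoidHom) this
    rw [hLfix g⁻¹, hconj_inv g K] at h3
    exact h3
end
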